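/- arXiv:1202.0337 — 2 statements merged into one kernel-verified Lean document; each statement's English description precedes it below -/
import Mathlib

section
/- Let p = 2f+1 be an odd prime and λ ∈ GF(p) with λ ≠ 0 and λ ≠ 1. Let N(p) be the number of affine points (x,y) ∈ GF(p)² with y² = x(x-1)(x-λ), and set a(p) = p - N(p) (so that a(p) = 1 + p minus the projective point count). Then a(p) ≡ (-1)^((p+1)/2) · (p-1) · Σ_{k=0}^{f} C(f+k,k)·C(f,k)·(-λ)^k (mod p). -/
/-!
Counting square roots by Euler's criterion gives `N ≡ ∑ₓ g(x)^f (mod p)` for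
`g = X (X - 1) (X - λ)`. Over `𝔽_q` the power sum `∑ₓ xⁿ` vanishes for `n < 2 (q - 1)` except at
`n = q - 1`, where it is `-1`; since `deg gᶠ = 3f < 4f`, the sum is minus the coefficient of
`x^{2f}` in `gᶠ`, namely `(-1)^(f+1) ∑ C(f,k)² λᵏ`. Finally `C(f+k,k) ≡ (-1)ᵏ C(f,k) (mod p)`,
because `f + j ≡ -(f + 1 - j)`.
-/

open Finset Polynomial

theorem Polynomial.coeff_two_mul_X_mul_X_sub_one_mul_X_sub_C_pow {R : Type*} [CommRing R]
    (lam : R) (f : ℕ) :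
    ((X * (X - 1) * (X - C lam)) ^ f).coeff (2 * f) =
      (-1) ^ f * ∑ k ∈ range (f + 1), (f.choose k : R) ^ 2 * lam ^ k := by
  rw [mul_pow, mul_pow, mul_assoc, two_mul, coeff_X_pow_mul, coeff_mul,
    Nat.sum_antidiagonal_eq_sum_range_succ_mk, mul_sum]
  refine sum_congr rfl fun i hi => ?_
  have hi : i ≤ f := Nat.lt_succ_iff.mp (mem_range.mp hi)
  rw [← C_1, sub_eq_add_neg, sub_eq_add_neg, ← C_neg, ← C_neg, coeff_X_add_C_pow,
    coeff_X_add_C_pow, Nat.sub_sub_self hi, Nat.choose_symm hi, neg_pow lam,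
    ← pow_sub_mul_pow (-1 : R) hi]
  ring

namespace FiniteField

variable {K : Type*} [Field K] [Fintype K]

theorem sum_pow_eq_ite_dvd {n : ℕ} (hn : n ≠ 0) :
    ∑ x : K, x ^ n = if Fintype.card K - 1 ∣ n then -1 else 0 := by
  classical
  have hval : univ.map ⟨((↑) : Kˣ → K), Units.val_injective⟩ = univ.erase 0 := by
    ext x
    simp only [mem_map, mem_univ, true_and, mem_erase, and_true, Function.Embedding.coeFn_mk]
    exact isUnit_iff_ne_zero
  rw [← sum_pow_units K n, ← sum_erase _ (zero_pow hn), ← hval, sum_map]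
  rfl

theorem sum_pow_of_lt_two_mul {n : ℕ} (hn : n < 2 * (Fintype.card K - 1)) :
    ∑ x : K, x ^ n = if n = Fintype.card K - 1 then -1 else 0 := by
  rcases lt_or_ge n (Fintype.card K - 1) with h | h
  · rw [sum_pow_lt_card_sub_one K n h, if_neg h.ne]
  · have hq : 0 < Fintype.card K - 1 := by have := Fintype.one_lt_card (α := K); omega
    rw [sum_pow_eq_ite_dvd (by omega)]
    refine if_congr ⟨fun ⟨c, hc⟩ => ?_, fun h => h ▸ dvd_rfl⟩ rfl rfl
    obtain rfl : c = 1 := by nlinarith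
    omega

theorem sum_eval_eq_neg_coeff (P : K[X]) (hP : P.natDegree < 2 * (Fintype.card K - 1)) :
    ∑ x : K, P.eval x = -P.coeff (Fintype.card K - 1) := by
  simp_rw [eval_eq_sum_range, sum_comm (s := univ), ← mul_sum]
  rw [sum_congr rfl fun n hn => by
    rw [sum_pow_of_lt_two_mul (by simp at hn; omega), mul_ite, mul_neg_one, mul_zero],
    sum_ite_eq']
  split_ifs with h
  · rfl
  · rw [coeff_eq_zero_of_natDegree_lt (by simp at h; omega), neg_zero]

theorem cast_card_sqrts [DecidableEq K] (hK : ringChar K ≠ 2) (c : K) :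
    (#{y : K | y ^ 2 = c} : K) = 1 + c ^ (Fintype.card K / 2) := by
  have := congrArg (Int.cast : ℤ → K) (quadraticChar_card_sqrts hK c)
  push_cast at this
  rw [quadraticChar_eq_pow_of_char_ne_two' hK] at this
  rw [add_comm, ← this]
  congr 2
  ext
  simp

theorem cast_card_sq_eq_fun [DecidableEq K] (hK : ringChar K ≠ 2) (g : K → K) :
    (#{xy : K × K | xy.2 ^ 2 = g xy.1} : K) = ∑ x, g x ^ (Fintype.card K / 2) := by
  rw [card_filter, Fintype.sum_prod_type, Nat.cast_sum]
  simp_rw [← card_filter, cast_card_sqrts hK, sum_add_distrib, sum_const, card_univ,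
    nsmul_one, cast_card_eq_zero, zero_add]

theorem sum_legendre_cubic_pow {f : ℕ} (hK : Fintype.card K = 2 * f + 1) (lam : K) :
    ∑ x : K, (x * (x - 1) * (x - lam)) ^ f =
      (-1) ^ (f + 1) * ∑ k ∈ range (f + 1), (f.choose k : K) ^ 2 * lam ^ k := by
  have hf : 0 < f := by have := Fintype.one_lt_card (α := K); omega
  have hdeg : ((X * (X - 1) * (X - C lam)) ^ f).natDegree < 2 * (Fintype.card K - 1) :=
    calc _ ≤ f * 3 := natDegree_pow_le_of_le f (by compute_degree)
      _ < _ := by omega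
  have := sum_eval_eq_neg_coeff _ hdeg
  simp only [eval_pow, eval_mul, eval_sub, eval_X, eval_one, eval_C] at this
  rw [this, hK, Nat.add_sub_cancel, coeff_two_mul_X_mul_X_sub_one_mul_X_sub_C_pow, pow_succ]
  ring

end FiniteField

theorem Nat.cast_descFactorial_add_eq_neg_one_pow_mul {R : Type*} [CommRing R] {m n : ℕ}
    (h : ((m + n + 1 : ℕ) : R) = 0) (k : ℕ) :
    ((m + k).descFactorial k : R) = (-1) ^ k * (n.descFactorial k : R) := by
  induction k with
  | zero => simp
  | succ k ih =>
    have hstep : ((m + k + 1 : ℕ) : R) * n.descFactorial k =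
        -((n - k : ℕ) * n.descFactorial k) := by
      rcases le_or_gt k n with hk | hk
      · rw [← neg_mul, ← sub_eq_zero, ← sub_mul, sub_neg_eq_add, ← Nat.cast_add,
          show m + k + 1 + (n - k) = m + n + 1 by omega, h, zero_mul]
      · simp [Nat.descFactorial_eq_zero_iff_lt.mpr hk]
    rw [← add_assoc, Nat.succ_descFactorial_succ, Nat.descFactorial_succ, Nat.cast_mul, ih,
      Nat.cast_mul, pow_succ]
    linear_combination (-1 : R) ^ k * hstep

theorem ZMod.natCast_choose_add_eq_neg_one_pow_mul {p : ℕ} [Fact p.Prime] {m n k : ℕ}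
    (h : p ∣ m + n + 1) (hk : k < p) :
    ((m + k).choose k : ZMod p) = (-1) ^ k * (n.choose k : ZMod p) := by
  have hfact : (k.factorial : ZMod p) ≠ 0 := by
    rw [Ne, ZMod.natCast_eq_zero_iff, Nat.Prime.dvd_factorial Fact.out]
    omega
  have := Nat.cast_descFactorial_add_eq_neg_one_pow_mul ((ZMod.natCast_eq_zero_iff _ p).mpr h) k
  simp only [Nat.descFactorial_eq_factorial_mul_choose, Nat.cast_mul] at this
  exact mul_left_cancel₀ hfact (by linear_combination this)

theorem ZMod.sum_choose_add_mul_choose_mul_neg_pow {p f : ℕ} [Fact p.Prime]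
    (hpf : p = 2 * f + 1) (lam : ZMod p) :
    ∑ k ∈ range (f + 1), ((f + k).choose k : ZMod p) * (f.choose k : ZMod p) * (-lam) ^ k =
      ∑ k ∈ range (f + 1), (f.choose k : ZMod p) ^ 2 * lam ^ k := by
  refine sum_congr rfl fun k hk => ?_
  rw [natCast_choose_add_eq_neg_one_pow_mul (n := f) ⟨1, by omega⟩ (by simp at hk; omega),
    neg_pow lam]
  have hsign : (-1 : ZMod p) ^ k * (-1) ^ k = 1 := by rw [← mul_pow]; norm_num
  linear_combination ((f.choose k : ZMod p) ^ 2 * lam ^ k) * hsign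

theorem stmt_1_general (p f : ℕ) [Fact p.Prime] (hpf : p = 2 * f + 1)
    (lam : ZMod p) :
    let N : ℕ := (Finset.univ.filter
      (fun xy : ZMod p × ZMod p => xy.2 ^ 2 = xy.1 * (xy.1 - 1) * (xy.1 - lam))).card
    ((p : ℤ) - N : ℤ) ≡ ((-1 : ℤ) ^ ((p + 1) / 2) * (p - 1) *
      ((∑ k ∈ Finset.range (f + 1),
        ((f + k).choose k : ZMod p) * (f.choose k : ZMod p) * (-lam) ^ k).val : ℤ)) [ZMOD p] := by
  dsimp only
  have hcard : Fintype.card (ZMod p) = 2 * f + 1 := by rw [ZMod.card, hpf]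
  have hN := FiniteField.cast_card_sq_eq_fun (by rw [ZMod.ringChar_zmod_n]; omega)
    (fun x : ZMod p => x * (x - 1) * (x - lam))
  rw [hcard, show (2 * f + 1) / 2 = f by omega, FiniteField.sum_legendre_cubic_pow hcard] at hN
  rw [← ZMod.intCast_eq_intCast_iff]
  push_cast
  rw [ZMod.natCast_self, ZMod.natCast_val, ZMod.cast_id, hN,
    ZMod.sum_choose_add_mul_choose_mul_neg_pow hpf, show (p + 1) / 2 = f + 1 by omega]
  ring

theorem stmt_1 (p f : ℕ) [Fact p.Prime] (hpf : p = 2 * f + 1) (hodd : Odd p)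
    (lam : ZMod p) (h0 : lam ≠ 0) (h1 : lam ≠ 1) :
    let N : ℕ := (Finset.univ.filter
      (fun xy : ZMod p × ZMod p => xy.2 ^ 2 = xy.1 * (xy.1 - 1) * (xy.1 - lam))).card
    ((p : ℤ) - N : ℤ) ≡ ((-1 : ℤ) ^ ((p + 1) / 2) * (p - 1) *
      ((∑ k ∈ Finset.range (f + 1),
        ((f + k).choose k : ZMod p) * (f.choose k : ZMod p) * (-lam) ^ k).val : ℤ)) [ZMOD p] :=
  stmt_1_general p f hpf lam
end

section
/- Let p = 2f+1 be an odd prime. Then Σ_{k=0}^{f} C(f+k,k)·C(f,k)·(-1)^k·λ^k ≡ Σ_{k=0}^{f} C(2k,k)²·(λ/16)^k (mod p) for every λ ∈ GF(p). -/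
/-! Since `p = 2f + 1`, the residue of `f` is `-1/2` in `ZMod p`, so for `k ≤ f < p` both
`C(f + k, k)` and `C(2k, k)` reduce to multiples of `C(f, k) = C(-1/2, k)`:
`C(f + k, k) ≡ (-1)^k C(f, k)` and `C(2k, k) ≡ (-4)^k C(f, k)`. Both sides of the congruence
are therefore termwise equal to `C(f, k)^2 λ^k`. -/

open Nat Polynomial

theorem Nat.descFactorial_two_mul_succ_succ (k : ℕ) :
    (2 * (k + 1)).descFactorial (k + 1) = 2 * (2 * k + 1) * (2 * k).descFactorial k := by
  have hsucc : (2 * k + 1).descFactorial (k + 1) = (k + 1) * (2 * k + 1).descFactorial k := by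
    rw [Nat.descFactorial_succ]; congr 1; omega
  rw [show 2 * (k + 1) = 2 * k + 1 + 1 by ring, Nat.succ_descFactorial_succ, mul_assoc 2,
    ← Nat.succ_descFactorial_succ (2 * k) k, hsucc]
  ring

section HalfIntegers

variable {R : Type*} [CommRing R] {x : R}

theorem descPochhammer_eval_add_natCast_of_two_mul_add_one_eq_zero (hx : 2 * x + 1 = 0) (k : ℕ) :
    (descPochhammer R k).eval (x + k) = (-1) ^ k * (descPochhammer R k).eval x := by
  rw [descPochhammer_eval_eq_ascPochhammer, add_sub_cancel_right,
    show x + 1 = -x by linear_combination hx, ascPochhammer_eval_neg_eq_descPochhammer]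

theorem natCast_descFactorial_two_mul_of_two_mul_add_one_eq_zero (hx : 2 * x + 1 = 0) (k : ℕ) :
    ((2 * k).descFactorial k : R) = (-4) ^ k * (descPochhammer R k).eval x := by
  induction k with
  | zero => simp
  | succ k ih =>
    rw [Nat.descFactorial_two_mul_succ_succ, Nat.cast_mul, ih, descPochhammer_succ_eval]
    push_cast
    linear_combination 2 * (-4) ^ k * (descPochhammer R k).eval x * hx

theorem natCast_choose_eq_of_natCast_descFactorial_eq {n m k : ℕ} {c : R}
    (hk : IsUnit (k ! : R)) (h : (n.descFactorial k : R) = c * m.descFactorial k) :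
    (n.choose k : R) = c * m.choose k := by
  rw [Nat.descFactorial_eq_factorial_mul_choose, Nat.descFactorial_eq_factorial_mul_choose] at h
  push_cast at h
  exact hk.mul_left_cancel (by linear_combination h)

variable {f k : ℕ}

theorem natCast_choose_add_of_two_mul_add_one_eq_zero (hf : (2 * f + 1 : R) = 0)
    (hk : IsUnit (k ! : R)) : ((f + k).choose k : R) = (-1) ^ k * f.choose k := by
  refine natCast_choose_eq_of_natCast_descFactorial_eq hk ?_
  rw [← descPochhammer_eval_eq_descFactorial, ← descPochhammer_eval_eq_descFactorial, Nat.cast_add,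
    descPochhammer_eval_add_natCast_of_two_mul_add_one_eq_zero hf]

theorem natCast_choose_two_mul_of_two_mul_add_one_eq_zero (hf : (2 * f + 1 : R) = 0)
    (hk : IsUnit (k ! : R)) : ((2 * k).choose k : R) = (-4) ^ k * f.choose k := by
  refine natCast_choose_eq_of_natCast_descFactorial_eq hk ?_
  rw [← descPochhammer_eval_eq_descFactorial R f,
    natCast_descFactorial_two_mul_of_two_mul_add_one_eq_zero hf]

end HalfIntegers

theorem stmt_15_general (p f : ℕ) (hp : p.Prime) (hpf : p = 2 * f + 1)
    (lam : ZMod p) :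
    ∑ k ∈ Finset.range (f + 1),
        ((f + k).choose k : ZMod p) * (f.choose k : ZMod p) * (-1) ^ k * lam ^ k
      = ∑ k ∈ Finset.range (f + 1),
        ((2 * k).choose k : ZMod p) ^ 2 * (lam * 16⁻¹) ^ k := by
  have := Fact.mk hp
  have hf : (2 * f + 1 : ZMod p) = 0 := by
    have hp0 : ((2 * f + 1 : ℕ) : ZMod p) = 0 := by rw [← hpf]; exact ZMod.natCast_self p
    exact_mod_cast hp0
  have h16 : (16 : ZMod p) ≠ 0 := by
    have h2 : (2 : ZMod p) ≠ 0 := fun h ↦ by simp [h] at hf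
    simpa [show (16 : ZMod p) = 2 ^ 4 by norm_num] using h2
  refine Finset.sum_congr rfl fun k hkf ↦ ?_
  have hk : IsUnit (k ! : ZMod p) :=
    (IsUnit.natCast_factorial_iff_of_charP p).2 (by have := Finset.mem_range.1 hkf; omega)
  rw [natCast_choose_add_of_two_mul_add_one_eq_zero hf hk,
    natCast_choose_two_mul_of_two_mul_add_one_eq_zero hf hk, mul_pow lam, inv_pow]
  field_simp
  rw [← pow_mul, ← pow_mul, mul_comm k 2, pow_mul, pow_mul]
  norm_num

theorem stmt_15 (p f : ℕ) (hp : p.Prime) (hpf : p = 2 * f + 1) (hodd : Odd p)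
    (lam : ZMod p) :
    ∑ k ∈ Finset.range (f + 1),
        ((f + k).choose k : ZMod p) * (f.choose k : ZMod p) * (-1) ^ k * lam ^ k
      = ∑ k ∈ Finset.range (f + 1),
        ((2 * k).choose k : ZMod p) ^ 2 * (lam * 16⁻¹) ^ k :=
  stmt_15_general p f hp hpf lam
end
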